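/- Let $m \geq 27$ be an integer, let $G_1 = K_p$ with $p \leq 27\sqrt{m} + 16\sqrt{m}/\log^3 m$, and let $G_2 = K_l + qK_1$ be the join of the complete graph $K_l$ with the empty graph on $q$ vertices, where $l \leq 27\sqrt{m}$ and $q \leq 2^{106\sqrt{m}/\log m}$. Then $R(G_1, G_2) \leq 2^{250\sqrt{m}}$. -/

import Mathlib

/-- `G` occurs as a (not necessarily induced) subgraph copy of `H`. -/
def IsCopyIn {α β : Type*} (G : SimpleGraph α) (H : SimpleGraph β) : Prop :=
  ∃ f : α ↪ β, ∀ ⦃a b : α⦄, G.Adj a b → H.Adj (f a) (f b)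

/-- `N` has the Ramsey property for the pair `(G₁, G₂)`: every blue-red edge
coloring of `K_N` (encoded by its graph of blue edges) contains a blue copy of `G₁`
or a red copy of `G₂`. -/
def RamseyProp {α β : Type*} (G₁ : SimpleGraph α) (G₂ : SimpleGraph β) (N : ℕ) : Prop :=
  ∀ blue : SimpleGraph (Fin N), IsCopyIn G₁ blue ∨ IsCopyIn G₂ blueᶜ

/-- The Ramsey number `R(G₁, G₂)`: the smallest positive integer `N` with the
Ramsey property. -/
noncomputable def ramsey {α β : Type*} (G₁ : SimpleGraph α) (G₂ : SimpleGraph β) : ℕ :=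
  sInf {N : ℕ | 0 < N ∧ RamseyProp G₁ G₂ N}

/-- The join `G + H` of two graphs. -/
def SimpleGraph.join {α β : Type*} (G : SimpleGraph α) (H : SimpleGraph β) :
    SimpleGraph (α ⊕ β) where
  Adj x y :=
    match x, y with
    | Sum.inl a, Sum.inl b => G.Adj a b
    | Sum.inr a, Sum.inr b => H.Adj a b
    | Sum.inl _, Sum.inr _ => True
    | Sum.inr _, Sum.inl _ => True
  symm := ⟨by
    rintro (a | a) (b | b) h
    · exact G.adj_symm h
    · trivial
    · trivial
    · exact H.adj_symm h⟩
  loopless := ⟨by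
    rintro (a | a) h
    · exact G.irrefl h
    · exact H.irrefl h⟩


open Finset in
lemma core_ramsey {V : Type*} [DecidableEq V] (blue : SimpleGraph V) [DecidableRel blue.Adj] :
    ∀ (n p l q : ℕ) (S : Finset V), p + l ≤ n → (q + 1) * 2 ^ (p + l) ≤ S.card →
    (∃ B : Finset V, B ⊆ S ∧ B.card = p ∧ ∀ x ∈ B, ∀ y ∈ B, x ≠ y → blue.Adj x y) ∨
    (∃ R T : Finset V, R ⊆ S ∧ T ⊆ S ∧ Disjoint R T ∧ R.card = l ∧ q ≤ T.card ∧
      (∀ x ∈ R, ∀ y ∈ R, x ≠ y → ¬ blue.Adj x y) ∧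
      (∀ x ∈ R, ∀ y ∈ T, ¬ blue.Adj x y)) := by
  intro n
  induction n with
  | zero =>
    intro p l q S hpl hcard
    have hp : p = 0 := by omega
    subst hp
    exact Or.inl ⟨∅, empty_subset _, rfl, by simp⟩
  | succ n ih =>
    intro p l q S hpl hcard
    match p, l with
    | 0, l => exact Or.inl ⟨∅, empty_subset _, rfl, by simp⟩
    | p+1, 0 =>
      have h1 : q + 1 ≤ (q+1) * 2 ^ (p+1+0) := Nat.le_mul_of_pos_right _ (Nat.two_pow_pos _)
      exact Or.inr ⟨∅, S, empty_subset _, subset_rfl, by simp, rfl, by omega, by simp, by simp⟩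
    | p+1, l+1 =>
      have hpos : 0 < S.card := lt_of_lt_of_le (by positivity) hcard
      obtain ⟨v, hv⟩ := card_pos.mp hpos
      set Nb := (S.erase v).filter (fun x => blue.Adj v x) with hNb
      set Nr := (S.erase v).filter (fun x => ¬ blue.Adj v x) with hNr
      have hNbS : Nb ⊆ S := (filter_subset _ _).trans (erase_subset _ _)
      have hNrS : Nr ⊆ S := (filter_subset _ _).trans (erase_subset _ _)
      have hvNb : v ∉ Nb := fun h => notMem_erase v S (mem_of_mem_filter _ h)
      have hvNr : v ∉ Nr := fun h => notMem_erase v S (mem_of_mem_filter _ h)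
      have hsum : Nb.card + Nr.card = (S.erase v).card :=
        card_filter_add_card_filter_not _
      have hev : (S.erase v).card = S.card - 1 := card_erase_of_mem hv
      have key : (q+1) * 2 ^ (p+l+1) ≤ Nb.card ∨ (q+1) * 2 ^ (p+l+1) ≤ Nr.card := by
        by_contra hc
        push_neg at hc
        have h2 : (q+1) * 2 ^ (p+1+(l+1)) = 2 * ((q+1) * 2 ^ (p+l+1)) := by ring
        omega
      rcases key with hb | hr
      · -- blue neighborhood large: reduce p
        have hres := ih p (l+1) q Nb (by omega) (by
          have : p + (l+1) = p + l + 1 := by omega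
          rw [this]; exact hb)
        rcases hres with ⟨B, hBS, hBc, hBcl⟩ | ⟨R, T, hRS, hTS, hdisj, hRc, hTq, hRcl, hcross⟩
        · left
          have hvB : v ∉ B := fun h => hvNb (hBS h)
          refine ⟨insert v B, insert_subset hv (hBS.trans hNbS), by
            rw [card_insert_of_notMem hvB, hBc], ?_⟩
          intro x hx y hy hxy
          rcases mem_insert.mp hx with rfl | hxB
          · rcases mem_insert.mp hy with rfl | hyB
            · exact absurd rfl hxy
            · exact (mem_filter.mp (hBS hyB)).2
          · rcases mem_insert.mp hy with rfl | hyB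
            · exact blue.adj_symm ((mem_filter.mp (hBS hxB)).2)
            · exact hBcl x hxB y hyB hxy
        · exact Or.inr ⟨R, T, hRS.trans hNbS, hTS.trans hNbS, hdisj, hRc, hTq, hRcl, hcross⟩
      · -- red neighborhood large: reduce l
        have hres := ih (p+1) l q Nr (by omega) (by
          have : p + 1 + l = p + l + 1 := by omega
          rw [this]; exact hr)
        rcases hres with ⟨B, hBS, hBc, hBcl⟩ | ⟨R, T, hRS, hTS, hdisj, hRc, hTq, hRcl, hcross⟩
        · exact Or.inl ⟨B, hBS.trans hNrS, hBc, hBcl⟩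
        · right
          have hvR : v ∉ R := fun h => hvNr (hRS h)
          have hvT : v ∉ T := fun h => hvNr (hTS h)
          refine ⟨insert v R, T, insert_subset hv (hRS.trans hNrS), hTS.trans hNrS,
            disjoint_insert_left.mpr ⟨hvT, hdisj⟩, by
              rw [card_insert_of_notMem hvR, hRc], hTq, ?_, ?_⟩
          · intro x hx y hy hxy
            rcases mem_insert.mp hx with rfl | hxR
            · rcases mem_insert.mp hy with rfl | hyR
              · exact absurd rfl hxy
              · exact (mem_filter.mp (hRS hyR)).2
            · rcases mem_insert.mp hy with rfl | hyR
              · exact fun h => (mem_filter.mp (hRS hxR)).2 (blue.adj_symm h)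
              · exact hRcl x hxR y hyR hxy
          · intro x hx y hy
            rcases mem_insert.mp hx with rfl | hxR
            · exact (mem_filter.mp (hTS hy)).2
            · exact hcross x hxR y hy

lemma ramseyProp_of_le (p l q N : ℕ) (hN : (q + 1) * 2 ^ (p + l) ≤ N) :
    RamseyProp (SimpleGraph.completeGraph (Fin p))
      (SimpleGraph.join (SimpleGraph.completeGraph (Fin l)) (⊥ : SimpleGraph (Fin q))) N := by
  classical
  intro blue
  rcases core_ramsey blue (p+l) p l q Finset.univ le_rfl (by simpa using hN) with
    ⟨B, _, hBc, hcl⟩ | ⟨R, T, _, _, hdisj, hRc, hTq, hRcl, hcross⟩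
  · left
    let e := B.equivFinOfCardEq hBc
    refine ⟨⟨fun i => (e.symm i : Fin N),
      fun a b h => e.symm.injective (Subtype.coe_injective h)⟩, ?_⟩
    intro a b hab
    have hne : a ≠ b := hab
    exact hcl _ (e.symm a).2 _ (e.symm b).2
      (fun h => hne (e.symm.injective (Subtype.coe_injective h)))
  · right
    obtain ⟨T', hT'sub, hT'c⟩ := Finset.exists_subset_card_eq hTq
    let eR := R.equivFinOfCardEq hRc
    let eT := T'.equivFinOfCardEq hT'c
    have hmemT : ∀ j : Fin q, ((eT.symm j : T') : Fin N) ∈ T := fun j => hT'sub (eT.symm j).2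
    have hneq : ∀ (a : Fin l) (b : Fin q),
        ((eR.symm a : R) : Fin N) ≠ ((eT.symm b : T') : Fin N) := by
      intro a b h
      exact (Finset.disjoint_left.mp hdisj (eR.symm a).2) (h ▸ hmemT b)
    refine ⟨⟨Sum.elim (fun i => ((eR.symm i : R) : Fin N)) (fun j => ((eT.symm j : T') : Fin N)),
      ?_⟩, ?_⟩
    · rintro (a | a) (b | b) h
      · exact congrArg Sum.inl (eR.symm.injective (Subtype.coe_injective h))
      · exact absurd h (hneq a b)
      · exact absurd h.symm (hneq b a)
      · exact congrArg Sum.inr (eT.symm.injective (Subtype.coe_injective h))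
    · rintro (a | a) (b | b) hab
      · have hne : a ≠ b := hab
        have hne' : ((eR.symm a : R) : Fin N) ≠ ((eR.symm b : R) : Fin N) :=
          fun h => hne (eR.symm.injective (Subtype.coe_injective h))
        exact (SimpleGraph.compl_adj _ _ _).mpr
          ⟨hne', hRcl _ (eR.symm a).2 _ (eR.symm b).2 hne'⟩
      · exact (SimpleGraph.compl_adj _ _ _).mpr
          ⟨hneq a b, hcross _ (eR.symm a).2 _ (hmemT b)⟩
      · exact (SimpleGraph.compl_adj _ _ _).mpr
          ⟨(hneq b a).symm, fun h => hcross _ (eR.symm b).2 _ (hmemT a) (blue.adj_symm h)⟩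
      · exact absurd hab (by simp [SimpleGraph.join])


lemma numeric_bound (m : ℕ) (hm : 27 ≤ m) (p l q : ℕ)
    (hp : (p : ℝ) ≤ 27 * Real.sqrt m + 16 * Real.sqrt m / (Real.logb 2 m) ^ 3)
    (hl : (l : ℝ) ≤ 27 * Real.sqrt m)
    (hq : (q : ℝ) ≤ 2 ^ (106 * Real.sqrt m / Real.logb 2 m)) :
    (((q + 1) * 2 ^ (p + l) : ℕ) : ℝ) ≤ 2 ^ (250 * Real.sqrt m) := by
  set s := Real.sqrt m with hs
  set L := Real.logb 2 m with hLdef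
  have hm16 : (16 : ℝ) ≤ (m : ℝ) := by
    have : (27 : ℝ) ≤ (m : ℝ) := by exact_mod_cast hm
    linarith
  have hmpos : (0 : ℝ) < (m : ℝ) := by linarith
  have hL4 : (4 : ℝ) ≤ L := by
    rw [hLdef, Real.le_logb_iff_rpow_le (by norm_num) hmpos]
    calc (2 : ℝ) ^ (4 : ℝ) = 2 ^ ((4 : ℕ) : ℝ) := by norm_num
      _ = 16 := by rw [Real.rpow_natCast]; norm_num
      _ ≤ (m : ℝ) := hm16
  have hs1 : (1 : ℝ) ≤ s := by
    rw [hs]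
    have := Real.sqrt_le_sqrt (show (1 : ℝ) ≤ (m : ℝ) by linarith)
    simpa using this
  have hspos : (0 : ℝ) ≤ s := by linarith
  -- bound on q + 1
  have hA : 106 * s / L ≤ 26.5 * s := by
    have h1 : 106 * s / L ≤ 106 * s / 4 :=
      div_le_div_of_nonneg_left (by positivity) (by norm_num) hL4
    linarith
  have hq1 : (q : ℝ) + 1 ≤ 2 ^ (26.5 * s + 1) := by
    have h1 : (2 : ℝ) ^ (106 * s / L) ≤ 2 ^ (26.5 * s) :=
      Real.rpow_le_rpow_of_exponent_le (by norm_num) hA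
    have h2 : (1 : ℝ) ≤ 2 ^ (26.5 * s) := by
      have := Real.rpow_le_rpow_of_exponent_le (show (1:ℝ) ≤ 2 by norm_num)
        (show (0 : ℝ) ≤ 26.5 * s by positivity)
      simpa using this
    have h3 : (2 : ℝ) ^ (26.5 * s + 1) = 2 ^ (26.5 * s) * 2 := by
      rw [Real.rpow_add (by norm_num), Real.rpow_one]
    nlinarith
  -- bound on 2^(p+l)
  have hpl : ((p + l : ℕ) : ℝ) ≤ 54.25 * s := by
    have hcube : (64 : ℝ) ≤ L ^ 3 := by
      calc (64 : ℝ) = 4 ^ 3 := by norm_num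
        _ ≤ L ^ 3 := pow_le_pow_left₀ (by norm_num) hL4 3
    have h1 : 16 * s / L ^ 3 ≤ 16 * s / 64 :=
      div_le_div_of_nonneg_left (by positivity) (by norm_num) hcube
    push_cast
    linarith
  have h2pl : ((2 : ℝ) ^ (p + l : ℕ)) ≤ 2 ^ (54.25 * s) := by
    rw [← Real.rpow_natCast 2 (p + l)]
    exact Real.rpow_le_rpow_of_exponent_le (by norm_num) hpl
  have hq0 : (0 : ℝ) ≤ (q : ℝ) + 1 := by positivity
  have hmul : (((q + 1) * 2 ^ (p + l) : ℕ) : ℝ) ≤ 2 ^ (26.5 * s + 1) * 2 ^ (54.25 * s) := by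
    push_cast
    exact mul_le_mul hq1 h2pl (by positivity) (by positivity)
  have hfin : (2 : ℝ) ^ (26.5 * s + 1) * 2 ^ (54.25 * s) ≤ 2 ^ (250 * s) := by
    rw [← Real.rpow_add (by norm_num)]
    exact Real.rpow_le_rpow_of_exponent_le (by norm_num) (by nlinarith)
  linarith

/-- Corollary: Ramsey bound for a complete graph versus a complete split graph. -/
theorem ramsey_complete_vs_completeSplit (m : ℕ) (hm : 27 ≤ m) (p l q : ℕ)
    (hp : (p : ℝ) ≤ 27 * Real.sqrt m + 16 * Real.sqrt m / (Real.logb 2 m) ^ 3)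
    (hl : (l : ℝ) ≤ 27 * Real.sqrt m)
    (hq : (q : ℝ) ≤ 2 ^ (106 * Real.sqrt m / Real.logb 2 m)) :
    (ramsey (SimpleGraph.completeGraph (Fin p))
        (SimpleGraph.join (SimpleGraph.completeGraph (Fin l)) (⊥ : SimpleGraph (Fin q))) : ℝ) ≤
      2 ^ (250 * Real.sqrt m) := by
  have hprop : RamseyProp (SimpleGraph.completeGraph (Fin p))
      (SimpleGraph.join (SimpleGraph.completeGraph (Fin l)) (⊥ : SimpleGraph (Fin q)))
      ((q + 1) * 2 ^ (p + l)) := ramseyProp_of_le p l q _ le_rfl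
  have hkey : ramsey (SimpleGraph.completeGraph (Fin p))
      (SimpleGraph.join (SimpleGraph.completeGraph (Fin l)) (⊥ : SimpleGraph (Fin q))) ≤
      (q + 1) * 2 ^ (p + l) :=
    Nat.sInf_le ⟨by positivity, hprop⟩
  calc (ramsey (SimpleGraph.completeGraph (Fin p))
        (SimpleGraph.join (SimpleGraph.completeGraph (Fin l)) (⊥ : SimpleGraph (Fin q))) : ℝ)
      ≤ (((q + 1) * 2 ^ (p + l) : ℕ) : ℝ) := by exact_mod_cast hkey
    _ ≤ 2 ^ (250 * Real.sqrt m) := numeric_bound m hm p l q hp hl hq
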